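/- arXiv:2308.00335 — 2 statements merged into one kernel-verified Lean document; each statement's English description precedes it below -/
import Mathlib

section
/- If ξ is an integrable random variable measurable with respect to F_s = σ(F_s^W ∪ F_s^M), where F^W and F^M are independent filtrations, then the conditional expectation of ξ given F_t^M equals the conditional expectation of ξ given F_s^M, for all t ≥ s. -/
/-!
Fix `B ∈ F_t^M ⊆ F_∞^M`. By independence of `F_s^W` and `F_∞^M`, the signed measures
`T ↦ μ(T ∩ B)` and `T ↦ ∫_T E[1_B | F_s^M]` agree on the π-system of rectangles `U ∩ V`
(`U ∈ F_s^W`, `V ∈ F_s^M`), hence on `F_s`: that is, `E[1_B | F_s] = E[1_B | F_s^M]`.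
Since `ξ` is `F_s`-measurable, the self-adjointness of conditional expectation,
`∫ E[1_B | m] ξ = ∫_B E[ξ | m]`, applied with `m = F_s` and `m = F_s^M` turns this into
`∫_B ξ = ∫_B E[ξ | F_s^M]`, which characterizes `E[ξ | F_t^M]`.
-/

open MeasureTheory ProbabilityTheory Set

section

variable {Ω : Type*} {m m0 : MeasurableSpace Ω} {μ : Measure[m0] Ω}

theorem MeasurableSpace.sup_eq_generateFrom_image2_inter (m₁ m₂ : MeasurableSpace Ω) :
    m₁ ⊔ m₂ =
      .generateFrom (image2 (· ∩ ·) {s | MeasurableSet[m₁] s} {t | MeasurableSet[m₂] t}) := by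
  refine le_antisymm (sup_le (fun s hs => ?_) (fun t ht => ?_)) (generateFrom_le ?_)
  · exact measurableSet_generateFrom ⟨s, hs, univ, .univ, inter_univ s⟩
  · exact measurableSet_generateFrom ⟨univ, .univ, t, ht, univ_inter t⟩
  · rintro _ ⟨s, hs, t, ht, rfl⟩
    exact (le_sup_left (a := m₁) _ hs).inter (le_sup_right (a := m₁) _ ht)

theorem isPiSystem_image2_inter_measurableSet (m₁ m₂ : MeasurableSpace Ω) :
    IsPiSystem (image2 (· ∩ ·) {s | MeasurableSet[m₁] s} {t | MeasurableSet[m₂] t}) := by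
  rintro _ ⟨s, hs, t, ht, rfl⟩ _ ⟨s', hs', t', ht', rfl⟩ _
  exact ⟨s ∩ s', hs.inter hs', t ∩ t', ht.inter ht', inter_inter_inter_comm s s' t t'⟩

theorem setIntegral_eq_of_isPiSystem {C : Set (Set Ω)} (hm : m ≤ m0)
    (hgen : m = .generateFrom C) (hC : IsPiSystem C) {f g : Ω → ℝ}
    (hf : Integrable f μ) (hg : Integrable g μ) (huniv : ∫ x, f x ∂μ = ∫ x, g x ∂μ)
    (hCfg : ∀ s ∈ C, ∫ x in s, f x ∂μ = ∫ x in s, g x ∂μ) {s : Set Ω} (hs : MeasurableSet[m] s) :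
    ∫ x in s, f x ∂μ = ∫ x in s, g x ∂μ := by
  have key : (μ.withDensityᵥ f).trim hm = (μ.withDensityᵥ g).trim hm := by
    refine VectorMeasure.ext_of_generateFrom C (fun s hs => ?_) hgen hC ?_
    · have hsm : MeasurableSet[m] s := hgen ▸ MeasurableSpace.measurableSet_generateFrom hs
      rw [VectorMeasure.trim_measurableSet_eq hm hsm, VectorMeasure.trim_measurableSet_eq hm hsm,
        withDensityᵥ_apply hf (hm _ hsm), withDensityᵥ_apply hg (hm _ hsm), hCfg s hs]
    · rw [VectorMeasure.trim_measurableSet_eq hm .univ,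
        VectorMeasure.trim_measurableSet_eq hm .univ, withDensityᵥ_apply hf .univ,
        withDensityᵥ_apply hg .univ]
      simpa only [Measure.restrict_univ] using huniv
  rw [← withDensityᵥ_apply hf (hm _ hs), ← withDensityᵥ_apply hg (hm _ hs),
    ← VectorMeasure.trim_measurableSet_eq hm hs, key, VectorMeasure.trim_measurableSet_eq hm hs]

theorem ae_abs_condExp_indicator_one_le (B : Set Ω) :
    ∀ᵐ x ∂μ, |μ[B.indicator (1 : Ω → ℝ) | m] x| ≤ 1 := by
  refine ae_bdd_abs_condExp_of_ae_bdd_abs (.of_forall fun x => ?_)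
  by_cases hx : x ∈ B <;> simp [hx]

theorem integral_condExp_indicator_mul [IsFiniteMeasure μ] (hm : m ≤ m0) {B : Set Ω}
    (hB : MeasurableSet B) {f : Ω → ℝ} (hf : Integrable f μ) :
    ∫ x, μ[B.indicator 1 | m] x * f x ∂μ = ∫ x in B, μ[f | m] x ∂μ := by
  have hB_int : Integrable (B.indicator (1 : Ω → ℝ)) μ := (integrable_const 1).indicator hB
  have hgf : Integrable (μ[B.indicator 1 | m] * f) μ :=
    hf.bdd_mul (stronglyMeasurable_condExp.mono hm).aestronglyMeasurable
      (ae_abs_condExp_indicator_one_le B)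
  have hBf : Integrable (B.indicator 1 * μ[f | m]) μ :=
    integrable_condExp.bdd_mul hB_int.aestronglyMeasurable (c := 1)
      (.of_forall fun x => by by_cases hx : x ∈ B <;> simp [hx])
  calc ∫ x, μ[B.indicator 1 | m] x * f x ∂μ
      = ∫ x, μ[B.indicator 1 | m] x * μ[f | m] x ∂μ :=
        (integral_condExp hm).symm.trans <| integral_congr_ae <|
          condExp_mul_of_stronglyMeasurable_left stronglyMeasurable_condExp hgf hf
    _ = ∫ x, B.indicator 1 x * μ[f | m] x ∂μ := by
        refine (integral_congr_ae ?_).trans (integral_condExp hm)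
        exact (condExp_mul_of_stronglyMeasurable_right stronglyMeasurable_condExp hBf hB_int).symm
    _ = ∫ x in B, μ[f | m] x ∂μ := by
        rw [← integral_indicator hB]
        congr 1 with x
        by_cases hx : x ∈ B <;> simp [hx]

end

namespace ProbabilityTheory

variable {Ω : Type*} {m m₁ m₂ mH m0 : MeasurableSpace Ω} {μ : Measure[m0] Ω}

theorem Indep.setIntegral_eq_mul_integral [IsZeroOrProbabilityMeasure μ] (hm₁ : m₁ ≤ m0)
    (hm₂ : m₂ ≤ m0) (hindep : Indep m₁ m₂ μ) {s : Set Ω} (hs : MeasurableSet[m₁] s) {f : Ω → ℝ}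
    (hf : Measurable[m₂] f) :
    ∫ x in s, f x ∂μ = μ.real s * ∫ x, f x ∂μ :=
  Indep.setIntegral_eq_mul (f := id) hm₁ (indep_of_indep_of_le_right hindep hf.comap_le)
    (hf.mono hm₂ le_rfl).aemeasurable hs aestronglyMeasurable_id

theorem Indep.setIntegral_inter_eq_mul [IsZeroOrProbabilityMeasure μ] (hm₁ : m₁ ≤ m0)
    (hm₂ : m₂ ≤ m0) (hindep : Indep m₁ m₂ μ) {s t : Set Ω} (hs : MeasurableSet[m₁] s)
    (ht : MeasurableSet[m₂] t) {f : Ω → ℝ} (hf : Measurable[m₂] f) :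
    ∫ x in s ∩ t, f x ∂μ = μ.real s * ∫ x in t, f x ∂μ := by
  rw [← setIntegral_indicator (hm₂ _ ht),
    hindep.setIntegral_eq_mul_integral hm₁ hm₂ hs (hf.indicator ht), integral_indicator (hm₂ _ ht)]

theorem condExp_indicator_sup_eq_of_indep [IsProbabilityMeasure μ] (hm₁ : m₁ ≤ m0)
    (hm₂H : m₂ ≤ mH) (hH : mH ≤ m0) (hindep : Indep m₁ mH μ) {B : Set Ω}
    (hB : MeasurableSet[mH] B) :
    μ[B.indicator (1 : Ω → ℝ) | m₁ ⊔ m₂] =ᵐ[μ] μ[B.indicator 1 | m₂] := by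
  have hm₂ : m₂ ≤ m0 := hm₂H.trans hH
  have hsup : m₁ ⊔ m₂ ≤ m0 := sup_le hm₁ hm₂
  have hB_int : Integrable (B.indicator (1 : Ω → ℝ)) μ := (integrable_const 1).indicator (hH _ hB)
  refine (ae_eq_condExp_of_forall_setIntegral_eq hsup hB_int
    (fun _ _ _ => integrable_condExp.integrableOn) (fun s hs _ => ?_)
    (stronglyMeasurable_condExp.mono (le_sup_right (a := m₁))).aestronglyMeasurable).symm
  refine setIntegral_eq_of_isPiSystem hsup
    (MeasurableSpace.sup_eq_generateFrom_image2_inter m₁ m₂)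
    (isPiSystem_image2_inter_measurableSet m₁ m₂) integrable_condExp hB_int
    (integral_condExp hm₂) ?_ hs
  rintro _ ⟨u₁, hu₁, u₂, hu₂, rfl⟩
  dsimp only
  rw [hindep.setIntegral_inter_eq_mul hm₁ hH hu₁ (hm₂H _ hu₂)
      (stronglyMeasurable_condExp.mono hm₂H).measurable,
    hindep.setIntegral_inter_eq_mul hm₁ hH hu₁ (hm₂H _ hu₂) (f := B.indicator 1)
      (measurable_const.indicator hB),
    setIntegral_condExp hm₂ hB_int hu₂]

theorem condExp_eq_of_indep_of_measurable_sup [IsProbabilityMeasure μ] (hm₁ : m₁ ≤ m0)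
    (hm₂ : m₂ ≤ m) (hm : m ≤ mH) (hH : mH ≤ m0) (hindep : Indep m₁ mH μ) {ξ : Ω → ℝ}
    (hξ : Measurable[m₁ ⊔ m₂] ξ) (hξ_int : Integrable ξ μ) :
    μ[ξ | m] =ᵐ[μ] μ[ξ | m₂] := by
  have hsup : m₁ ⊔ m₂ ≤ m0 := sup_le hm₁ (hm₂.trans (hm.trans hH))
  refine (ae_eq_condExp_of_forall_setIntegral_eq (hm.trans hH) hξ_int
    (fun _ _ _ => integrable_condExp.integrableOn) (fun B hBm _ => ?_)
    (stronglyMeasurable_condExp.mono hm₂).aestronglyMeasurable).symm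
  have hB : MeasurableSet B := hH _ (hm _ hBm)
  calc ∫ x in B, μ[ξ | m₂] x ∂μ
      = ∫ x, μ[B.indicator 1 | m₂] x * ξ x ∂μ :=
        (integral_condExp_indicator_mul (hm₂.trans (hm.trans hH)) hB hξ_int).symm
    _ = ∫ x, μ[B.indicator 1 | m₁ ⊔ m₂] x * ξ x ∂μ := by
        refine integral_congr_ae ?_
        filter_upwards [condExp_indicator_sup_eq_of_indep hm₁ (hm₂.trans hm) hH hindep
          (hm _ hBm)] with x hx
        rw [hx]
    _ = ∫ x in B, μ[ξ | m₁ ⊔ m₂] x ∂μ := integral_condExp_indicator_mul hsup hB hξ_int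
    _ = ∫ x in B, ξ x ∂μ := by
        rw [condExp_of_stronglyMeasurable hsup hξ.stronglyMeasurable hξ_int]

end ProbabilityTheory

theorem stmt0_general {Ω : Type*} [m0 : MeasurableSpace Ω] (μ : Measure Ω) [IsProbabilityMeasure μ]
    (FW FM : ℝ → MeasurableSpace Ω)
    (hFMmono : Monotone FM)
    (hFWle : ∀ t, FW t ≤ m0) (hFMle : ∀ t, FM t ≤ m0)
    (hindep : Indep (⨆ t, FW t) (⨆ t, FM t) μ)
    (s t : ℝ) (hst : s ≤ t)
    (ξ : Ω → ℝ) (hmeas : Measurable[FW s ⊔ FM s] ξ) (hint : Integrable ξ μ) :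
    μ[ξ | FM t] =ᵐ[μ] μ[ξ | FM s] :=
  condExp_eq_of_indep_of_measurable_sup (hFWle s) (hFMmono hst) (le_iSup FM t) (iSup_le hFMle)
    (indep_of_indep_of_le_left hindep (le_iSup FW s)) hmeas hint

/-- If `ξ` is integrable and measurable w.r.t. `F_s = σ(F_s^W ∪ F_s^M)`, where the filtrations
`F^W` and `F^M` are independent, then `E[ξ | F_t^M] = E[ξ | F_s^M]` for all `t ≥ s`. -/
theorem stmt0 {Ω : Type*} [m0 : MeasurableSpace Ω] (μ : Measure Ω) [IsProbabilityMeasure μ]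
    (FW FM : ℝ → MeasurableSpace Ω)
    (hFWmono : Monotone FW) (hFMmono : Monotone FM)
    (hFWle : ∀ t, FW t ≤ m0) (hFMle : ∀ t, FM t ≤ m0)
    (hindep : Indep (⨆ t, FW t) (⨆ t, FM t) μ)
    (s t : ℝ) (hst : s ≤ t)
    (ξ : Ω → ℝ) (hmeas : Measurable[FW s ⊔ FM s] ξ) (hint : Integrable ξ μ) :
    μ[ξ | FM t] =ᵐ[μ] μ[ξ | FM s] :=
  stmt0_general (m0 := m0) μ FW FM hFMmono hFWle hFMle hindep s t hst ξ hmeas hint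
end

section
/- Let U be a real Hilbert space, Ψ : U → U bounded self-adjoint with Ψ ≥ 0, ψ₁ ∈ U, and J(u) = ½(⟨Ψu,u⟩ + 2⟨ψ₁,u⟩ + ψ₀). Then J attains its minimum on U if and only if ψ₁ belongs to the range of Ψ. Moreover ū minimizes J if and only if Ψū + ψ₁ = 0. -/
open scoped RealInnerProductSpace

/-!
Symmetry of `Ψ` gives the exact expansion
`J (ū + v) = J ū + ⟪Ψ ū + ψ₁, v⟫ + ½ ⟪Ψ v, v⟫`.
If the gradient `Ψ ū + ψ₁` vanishes, positivity of `Ψ` makes `ū` a minimizer. Conversely, at a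
minimizer the quadratic `t ↦ J (ū + t • w) - J ū` is nonnegative, so its discriminant
`⟪Ψ ū + ψ₁, w⟫²` is `≤ 0`; taking `w = Ψ ū + ψ₁` forces the gradient to vanish.
-/

section QuadraticObjective

variable {E : Type*} [NormedAddCommGroup E] [InnerProductSpace ℝ E]

noncomputable def quadObjective (T : E →ₗ[ℝ] E) (b : E) (c : ℝ) (u : E) : ℝ :=
  1 / 2 * (⟪T u, u⟫ + 2 * ⟪b, u⟫ + c)

variable {T : E →ₗ[ℝ] E} {b : E} {c : ℝ}

theorem quadObjective_add (hT : T.IsSymmetric) (u v : E) :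
    quadObjective T b c (u + v) =
      quadObjective T b c u + ⟪T u + b, v⟫ + 1 / 2 * ⟪T v, v⟫ := by
  have hvu : ⟪T v, u⟫ = ⟪T u, v⟫ := by rw [hT, real_inner_comm]
  simp only [quadObjective, map_add, inner_add_left, inner_add_right, hvu]
  ring

theorem quadObjective_add_smul (hT : T.IsSymmetric) (u w : E) (t : ℝ) :
    quadObjective T b c (u + t • w) - quadObjective T b c u =
      1 / 2 * ⟪T w, w⟫ * (t * t) + ⟪T u + b, w⟫ * t := by
  rw [quadObjective_add hT, map_smul, inner_smul_left, inner_smul_right, inner_smul_right]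
  simp only [conj_trivial]
  ring

theorem add_eq_zero_of_forall_quadObjective_le (hT : T.IsSymmetric) {ubar : E}
    (hmin : ∀ u, quadObjective T b c ubar ≤ quadObjective T b c u) : T ubar + b = 0 := by
  set w := T ubar + b
  have hquad : ∀ t : ℝ, 0 ≤ 1 / 2 * ⟪T w, w⟫ * (t * t) + ⟪w, w⟫ * t + 0 := fun t => by
    rw [add_zero, ← quadObjective_add_smul hT]
    exact sub_nonneg.mpr (hmin _)
  have hdisc := discrim_le_zero hquad
  rw [discrim, mul_zero, sub_zero] at hdisc
  exact inner_self_eq_zero.mp (pow_eq_zero_iff two_ne_zero |>.mp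
    (le_antisymm hdisc (sq_nonneg _)))

theorem quadObjective_le_of_add_eq_zero (hT : T.IsSymmetric) (hpos : ∀ u, 0 ≤ ⟪T u, u⟫)
    {ubar : E} (hgrad : T ubar + b = 0) (u : E) :
    quadObjective T b c ubar ≤ quadObjective T b c u := by
  have hexp := quadObjective_add (b := b) (c := c) hT ubar (u - ubar)
  rw [add_sub_cancel, hgrad, inner_zero_left] at hexp
  linarith [hpos (u - ubar)]

theorem forall_quadObjective_le_iff (hT : T.IsSymmetric) (hpos : ∀ u, 0 ≤ ⟪T u, u⟫)
    (ubar : E) : (∀ u, quadObjective T b c ubar ≤ quadObjective T b c u) ↔ T ubar + b = 0 :=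
  ⟨add_eq_zero_of_forall_quadObjective_le hT, quadObjective_le_of_add_eq_zero hT hpos⟩

theorem exists_forall_quadObjective_le_iff (hT : T.IsSymmetric) (hpos : ∀ u, 0 ≤ ⟪T u, u⟫) :
    (∃ ubar, ∀ u, quadObjective T b c ubar ≤ quadObjective T b c u) ↔ ∃ u, T u = b := by
  simp only [forall_quadObjective_le_iff hT hpos, add_eq_zero_iff_eq_neg]
  constructor
  · rintro ⟨ubar, h⟩
    exact ⟨-ubar, by rw [map_neg, h, neg_neg]⟩
  · rintro ⟨u, h⟩
    exact ⟨-u, by rw [map_neg, h]⟩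

end QuadraticObjective

theorem stmt11_general {U : Type*} [NormedAddCommGroup U] [InnerProductSpace ℝ U]
    (Ψ : U →L[ℝ] U) (hsa : ∀ u v : U, ⟪Ψ u, v⟫ = ⟪u, Ψ v⟫)
    (hpos : ∀ u : U, 0 ≤ ⟪Ψ u, u⟫)
    (ψ₁ : U) (ψ₀ : ℝ) (J : U → ℝ)
    (hJ : ∀ u, J u = (1 / 2) * (⟪Ψ u, u⟫ + 2 * ⟪ψ₁, u⟫ + ψ₀)) :
    ((∃ ubar : U, ∀ u : U, J ubar ≤ J u) ↔ (∃ u : U, Ψ u = ψ₁)) ∧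
    (∀ ubar : U, (∀ u : U, J ubar ≤ J u) ↔ Ψ ubar + ψ₁ = 0) := by
  have hJq : J = quadObjective (Ψ : U →ₗ[ℝ] U) ψ₁ ψ₀ := funext hJ
  subst hJq
  exact ⟨exists_forall_quadObjective_le_iff hsa hpos,
    forall_quadObjective_le_iff hsa hpos⟩

/-- For `J(u) = ½(⟨Ψu,u⟩ + 2⟨ψ₁,u⟩ + ψ₀)` with `Ψ ≥ 0` bounded self-adjoint, `J` attains its
minimum iff `ψ₁ ∈ Ran(Ψ)`, and `ū` is a minimizer iff `Ψū + ψ₁ = 0`. -/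
theorem stmt11 {U : Type*} [NormedAddCommGroup U] [InnerProductSpace ℝ U] [CompleteSpace U]
    (Ψ : U →L[ℝ] U) (hsa : ∀ u v : U, ⟪Ψ u, v⟫ = ⟪u, Ψ v⟫)
    (hpos : ∀ u : U, 0 ≤ ⟪Ψ u, u⟫)
    (ψ₁ : U) (ψ₀ : ℝ) (J : U → ℝ)
    (hJ : ∀ u, J u = (1 / 2) * (⟪Ψ u, u⟫ + 2 * ⟪ψ₁, u⟫ + ψ₀)) :
    ((∃ ubar : U, ∀ u : U, J ubar ≤ J u) ↔ (∃ u : U, Ψ u = ψ₁)) ∧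
    (∀ ubar : U, (∀ u : U, J ubar ≤ J u) ↔ Ψ ubar + ψ₁ = 0) :=
  stmt11_general Ψ hsa hpos ψ₁ ψ₀ J hJ
end
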